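/- As formal power series, Σ_{k≥1} ( Σ_{p₁+p₂ = k-1} (2p₁+1)·Cat(p₁)·Cat(p₂) ) x^k = x·T³/(1 - x·T²). -/

import Mathlib

/-!
The inner sum is the coefficient of `x^(k-1)` in `(T + 2xT') T`, and differentiating
`T = 1 + x T²` gives `T' = T (T + 2xT')`; so the series on the left is `x T'`, and
`x T' (1 - x T²) = x T³` follows from the functional equation once more.
-/

open PowerSeries

noncomputable def catalanSeries : PowerSeries ℚ :=
  PowerSeries.mk fun k => (catalan k : ℚ)

theorem PowerSeries.coeff_add_two_mul_X_mul_derivative {R : Type*} [CommSemiring R]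
    (f : R⟦X⟧) (n : ℕ) :
    coeff n (f + 2 * X * d⁄dX R f) = ((2 * n + 1 : ℕ) : R) * coeff n f := by
  cases n with
  | zero => simp
  | succ n =>
    rw [map_add, mul_assoc, ← map_ofNat C 2, coeff_C_mul, coeff_succ_X_mul, coeff_derivative]
    push_cast
    ring

theorem catalanSeries_eq_map : _root_.catalanSeries =
    map (Nat.castRingHom ℚ) PowerSeries.catalanSeries := by
  ext n
  simp [_root_.catalanSeries]

theorem catalanSeries_sq_mul_X_add_one :
    _root_.catalanSeries ^ 2 * X + 1 = _root_.catalanSeries := by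
  simpa [← catalanSeries_eq_map] using
    congrArg (map (Nat.castRingHom ℚ)) PowerSeries.catalanSeries_sq_mul_X_add_one

theorem derivative_catalanSeries :
    d⁄dX ℚ _root_.catalanSeries =
      _root_.catalanSeries * (_root_.catalanSeries + 2 * X * d⁄dX ℚ _root_.catalanSeries) := by
  conv_lhs => rw [← _root_.catalanSeries_sq_mul_X_add_one]
  rw [map_add, derivative_one, Derivation.leibniz, derivative_pow, derivative_X]
  simp only [smul_eq_mul]
  ring

theorem mk_sum_antidiagonal_two_mul_add_one_mul_catalan :
    (PowerSeries.mk fun k =>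
        if k < 1 then (0 : ℚ)
        else ∑ p ∈ Finset.HasAntidiagonal.antidiagonal (k - 1),
          ((2 * p.1 + 1 : ℕ) : ℚ) * (catalan p.1 : ℚ) * (catalan p.2 : ℚ)) =
      X * ((_root_.catalanSeries + 2 * X * d⁄dX ℚ _root_.catalanSeries) *
        _root_.catalanSeries) := by
  ext n
  cases n with
  | zero => simp
  | succ n =>
    rw [coeff_mk, coeff_succ_X_mul, coeff_mul]
    simp only [coeff_add_two_mul_X_mul_derivative]
    simp [_root_.catalanSeries, mul_assoc]

theorem self_loop_series :
    (PowerSeries.mk fun k =>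
        if k < 1 then (0 : ℚ)
        else ∑ p ∈ Finset.HasAntidiagonal.antidiagonal (k - 1),
          ((2 * p.1 + 1 : ℕ) : ℚ) * (catalan p.1 : ℚ) * (catalan p.2 : ℚ)) *
      (1 - PowerSeries.X * _root_.catalanSeries ^ 2) =
      PowerSeries.X * _root_.catalanSeries ^ 3 := by
  rw [mk_sum_antidiagonal_two_mul_add_one_mul_catalan, mul_comm _ _root_.catalanSeries,
    ← derivative_catalanSeries]
  set T := _root_.catalanSeries
  linear_combination (X * d⁄dX ℚ T) * _root_.catalanSeries_sq_mul_X_add_one +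
    (X * T) * derivative_catalanSeries
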